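/- River satisfies independence of quasi-Pareto-dominated alternatives on uniquely weighted profiles: for every uniquely weighted preference profile P and alternatives a, b ∈ A(P) such that b quasi-Pareto-dominates a, RV(P) = RV(P_{−a}). -/

import Mathlib

/-!
On a uniquely weighted profile the tiebreaker is forced and strictly decreasing in margin.
Quasi-Pareto dominance makes `(b, a)` the strongest edge at `a`, so every edge processed before
it avoids `a`, and River accepts `(b, a)`. Afterwards `a` has an incoming edge, so no edge
`(z, a)` is accepted. An edge `(a, z)` is processed after `(b, z)` because `b` covers `a`;
if `(b, z)` was accepted, `z` already has an incoming edge, and if it was rejected, `z` either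
has one or reaches `b`, hence `a`. As `a` never gets an outgoing edge, `(b, a)` does not affect
any other decision: the River diagram of `P` is that of `P₋ₐ` plus `(b, a)`, with the same
sources apart from `a`.
-/

/-! ## Preference profiles -/

/-- A preference profile: a finite set of voters, a finite set of alternatives,
and for each voter a (Boolean-valued) preference relation, `pref i x y` meaning
voter `i` ranks `x` above `y`. -/
structure Profile (ν α : Type) where
  voters : Finset ν
  alts : Finset α
  pref : ν → α → α → Bool

namespace Profile

variable {ν α : Type}

/-- A profile is valid if there is at least one voter, at least two alternatives,
and every voter's preference is a strict linear order on the alternatives. -/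
def Valid (P : Profile ν α) : Prop :=
  P.voters.Nonempty ∧ 2 ≤ P.alts.card ∧
  (∀ i ∈ P.voters, ∀ a ∈ P.alts, ¬ P.pref i a a) ∧
  (∀ i ∈ P.voters, ∀ a ∈ P.alts, ∀ b ∈ P.alts, ∀ c ∈ P.alts,
      P.pref i a b → P.pref i b c → P.pref i a c) ∧
  (∀ i ∈ P.voters, ∀ a ∈ P.alts, ∀ b ∈ P.alts, a ≠ b → (P.pref i a b ↔ ¬ P.pref i b a))

/-- The majority margin of `x` over `y`. -/
def margin (P : Profile ν α) (x y : α) : ℤ :=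
  ((P.voters.filter (fun i => P.pref i x y)).card : ℤ) -
    ((P.voters.filter (fun i => P.pref i y x)).card : ℤ)

/-- The restriction of a profile to the alternatives other than `x`. -/
def restrict [DecidableEq α] (P : Profile ν α) (x : α) : Profile ν α :=
  ⟨P.voters, P.alts.erase x, P.pref⟩

/-- `y` Pareto-dominates `x`: every voter ranks `y` above `x`,
i.e. the margin of `y` over `x` equals the number of voters. -/
def ParetoDominates (P : Profile ν α) (y x : α) : Prop :=
  P.margin y x = P.voters.card

/-- A profile is uniquely weighted if no margin between distinct alternatives is zero and
distinct ordered pairs of distinct alternatives have distinct margins. -/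
def UniquelyWeighted (P : Profile ν α) : Prop :=
  (∀ x ∈ P.alts, ∀ y ∈ P.alts, x ≠ y → P.margin x y ≠ 0) ∧
  (∀ x ∈ P.alts, ∀ y ∈ P.alts, ∀ v ∈ P.alts, ∀ w ∈ P.alts,
      x ≠ y → v ≠ w → (x, y) ≠ (v, w) → P.margin x y ≠ P.margin v w)

end Profile

/-! ## Lists, precedence, tiebreakers -/

/-- `e` precedes `f` in the list `L`. -/
def Precedes {β : Type} (L : List β) (e f : β) : Prop :=
  ∃ l₁ l₂ l₃ : List β, L = l₁ ++ e :: (l₂ ++ f :: l₃)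

/-- A tiebreaker for a profile `P`: a linear order (list) of all ordered pairs of distinct
alternatives with nonnegative margin, in which pairs with strictly larger margin come first. -/
def IsTiebreaker {ν α : Type} (P : Profile ν α) (L : List (α × α)) : Prop :=
  L.Nodup ∧
  (∀ e : α × α, e ∈ L ↔ e.1 ∈ P.alts ∧ e.2 ∈ P.alts ∧ e.1 ≠ e.2 ∧ 0 ≤ P.margin e.1 e.2) ∧
  L.Pairwise (fun e f => P.margin f.1 f.2 ≤ P.margin e.1 e.2)

/-! ## The River method -/

open Classical in
/-- The River diagram: process the edges in the order given by `L`, adding an edge unless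
it would create a directed cycle or a second incoming edge at its target. -/
noncomputable def riverDiagram {α : Type} (L : List (α × α)) : Finset (α × α) :=
  L.foldl (fun E e =>
    if (∃ f ∈ E, f.2 = e.2) ∨ Relation.ReflTransGen (fun a b => (a, b) ∈ E) e.2 e.1
    then E else insert e E) ∅

open Classical in
/-- The River winners: the sources (vertices with no incoming edge) of the River diagram. -/
noncomputable def riverWinners {ν α : Type} (P : Profile ν α) (L : List (α × α)) : Finset α :=
  P.alts.filter (fun x => ∀ f ∈ riverDiagram L, f.2 ≠ x)

/-! ## Split Cycle -/

/-- The (cyclically) consecutive edges of a cycle given by a list of distinct vertices. -/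
def cycleEdges {α : Type} (c : List α) : List (α × α) := c.zip (c.rotate 1)

/-- A majority cycle: a cycle of distinct alternatives all of whose edges have positive margin. -/
def IsMajorityCycle {ν α : Type} (P : Profile ν α) (c : List α) : Prop :=
  c.Nodup ∧ (∀ a ∈ c, a ∈ P.alts) ∧ ∀ e ∈ cycleEdges c, 0 < P.margin e.1 e.2

/-- `e` is a splitting edge of some majority cycle: it attains the minimum margin on the cycle. -/
def IsSplittingEdge {ν α : Type} (P : Profile ν α) (e : α × α) : Prop :=
  ∃ c : List α, IsMajorityCycle P c ∧ e ∈ cycleEdges c ∧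
    ∀ f ∈ cycleEdges c, P.margin e.1 e.2 ≤ P.margin f.1 f.2

open Classical in
/-- The Split Cycle winners: alternatives with no incoming edge in the Split Cycle diagram,
whose edges are the positive-margin pairs that are not splitting edges of any majority cycle. -/
noncomputable def splitCycleWinners {ν α : Type} (P : Profile ν α) : Finset α :=
  P.alts.filter (fun x => ¬ ∃ y ∈ P.alts, 0 < P.margin y x ∧ ¬ IsSplittingEdge P (y, x))

/-! ## Ranked Pairs -/

/-- A processing order for Ranked Pairs: all pairs with positive margin,
ordered by decreasing margin. -/
def IsRPOrder {ν α : Type} (P : Profile ν α) (L : List (α × α)) : Prop :=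
  L.Nodup ∧
  (∀ e : α × α, e ∈ L ↔ e.1 ∈ P.alts ∧ e.2 ∈ P.alts ∧ 0 < P.margin e.1 e.2) ∧
  L.Pairwise (fun e f => P.margin f.1 f.2 ≤ P.margin e.1 e.2)

open Classical in
/-- The Ranked Pairs diagram: add each edge in order unless it would create a directed cycle. -/
noncomputable def rpDiagram {α : Type} (L : List (α × α)) : Finset (α × α) :=
  L.foldl (fun E e =>
    if Relation.ReflTransGen (fun a b => (a, b) ∈ E) e.2 e.1 then E else insert e E) ∅

open Classical in
/-- The Ranked Pairs winners: sources of the Ranked Pairs diagram. -/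
noncomputable def rpWinners {ν α : Type} (P : Profile ν α) (L : List (α × α)) : Finset α :=
  P.alts.filter (fun x => ∀ f ∈ rpDiagram L, f.2 ≠ x)

/-! ## Beat Path -/

/-- A majority path: a sequence of distinct alternatives with positive margins along it. -/
def IsMajorityPath {ν α : Type} (P : Profile ν α) (p : List α) : Prop :=
  p.Nodup ∧ (∀ a ∈ p, a ∈ P.alts) ∧ p.Chain' (fun a b => 0 < P.margin a b)

/-- `s_P(x,y)`: the maximum strength (minimum margin along the path) of a majority path
from `x` to `y`, and `0` if there is no such path. -/
noncomputable def beatPathStrength {ν α : Type} (P : Profile ν α) (x y : α) : ℤ :=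
  sSup ({0} ∪ {s : ℤ | ∃ p : List α, IsMajorityPath P p ∧ p.head? = some x ∧
    p.getLast? = some y ∧ ((p.zip p.tail).map (fun e => P.margin e.1 e.2)).min? = some s})

open Classical in
/-- The Beat Path winners. -/
noncomputable def beatPathWinners {ν α : Type} (P : Profile ν α) : Finset α :=
  P.alts.filter (fun x => ∀ y ∈ P.alts, y ≠ x →
    beatPathStrength P y x ≤ beatPathStrength P x y)

/-! ## Stable Voting -/

/-- Auxiliary, fuel-based definition of Stable Voting (for uniquely weighted profiles).
If only one alternative remains it wins; otherwise the winner is the alternative `x` of the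
first pair `(x,y)` (ordered by decreasing margin) with `m(x,y) > 0` and `x` a Split Cycle
winner, such that `x` is a Stable Voting winner of the profile without `y`. -/
noncomputable def svAux {ν α : Type} [DecidableEq α] : ℕ → Profile ν α → Set α
  | 0, P => ↑P.alts
  | (n+1), P =>
      if P.alts.card ≤ 1 then ↑P.alts
      else {x | x ∈ P.alts ∧ ∃ y ∈ P.alts, 0 < P.margin x y ∧ x ∈ splitCycleWinners P ∧
        x ∈ svAux n (P.restrict y) ∧
        ∀ x' ∈ P.alts, ∀ y' ∈ P.alts, 0 < P.margin x' y' → x' ∈ splitCycleWinners P →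
          P.margin x y < P.margin x' y' → x' ∉ svAux n (P.restrict y')}

/-- The Stable Voting winners (for uniquely weighted profiles). -/
noncomputable def svWinners {ν α : Type} [DecidableEq α] (P : Profile ν α) : Set α :=
  svAux P.alts.card P

/-! ## Smith set, covering, quasi-Pareto domination -/

/-- A dominant set of alternatives: nonempty, and each member defeats every non-member. -/
def IsDominant {ν α : Type} (P : Profile ν α) (X : Finset α) : Prop :=
  X.Nonempty ∧ X ⊆ P.alts ∧ ∀ x ∈ X, ∀ y ∈ P.alts, y ∉ X → 0 < P.margin x y

/-- The Smith set: the inclusion-minimal dominant set. -/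
def IsSmithSet {ν α : Type} (P : Profile ν α) (S : Finset α) : Prop :=
  IsDominant P S ∧ ∀ X : Finset α, IsDominant P X → S ⊆ X

/-- `y` covers `x`: `y` defeats `x` and does at least as well against every third alternative. -/
def Covers {ν α : Type} (P : Profile ν α) (y x : α) : Prop :=
  0 < P.margin y x ∧ ∀ z ∈ P.alts, z ≠ x → z ≠ y → P.margin x z ≤ P.margin y z

/-- `y` quasi-Pareto-dominates `x`. -/
def QuasiParetoDominates {ν α : Type} (P : Profile ν α) (y x : α) : Prop :=
  Covers P y x ∧ ∀ z ∈ P.alts, z ≠ x → z ≠ y →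
    P.margin z x ≤ P.margin y x ∧ P.margin x z ≤ P.margin y x

/-! ## Tiebreaker functions -/

/-- A consistent tiebreaker function: it assigns a tiebreaker to every profile, and the relative
order of two edges not involving `x` is unchanged when `x` is removed from the profile. -/
def IsConsistentTBF {ν α : Type} [DecidableEq α] (T : Profile ν α → List (α × α)) : Prop :=
  (∀ P : Profile ν α, IsTiebreaker P (T P)) ∧
  ∀ (P : Profile ν α) (x a b c d : α), x ∈ P.alts →
    x ≠ a → x ≠ b → x ≠ c → x ≠ d →
    (a, b) ∈ T P → (c, d) ∈ T P →
    (Precedes (T P) (a, b) (c, d) ↔ Precedes (T (P.restrict x)) (a, b) (c, d))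

/-- A Pareto-consistent tiebreaker function: consistent, and whenever `y` Pareto-dominates `x`,
the edge `(y,z)` precedes the edge `(x,z)` for every third alternative `z`. -/
def IsParetoConsistentTBF {ν α : Type} [DecidableEq α]
    (T : Profile ν α → List (α × α)) : Prop :=
  IsConsistentTBF T ∧
  ∀ (P : Profile ν α) (x y z : α), P.ParetoDominates y x →
    z ≠ x → z ≠ y → (y, z) ∈ T P → (x, z) ∈ T P → Precedes (T P) (y, z) (x, z)

/-- A quasi-Pareto-consistent tiebreaker function. -/
def IsQuasiParetoConsistentTBF {ν α : Type} [DecidableEq α]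
    (T : Profile ν α → List (α × α)) : Prop :=
  IsParetoConsistentTBF T ∧
  (∀ (P : Profile ν α) (x y y' : α),
      P.margin y x = P.margin y' x → QuasiParetoDominates P y x →
      ¬ QuasiParetoDominates P y' x →
      (y, x) ∈ T P → (y', x) ∈ T P → Precedes (T P) (y, x) (y', x)) ∧
  (∀ (P : Profile ν α) (x y z : α), QuasiParetoDominates P y x →
      ((x, z) ∈ T P → (y, z) ∈ T P → Precedes (T P) (y, z) (x, z)) ∧
      ((x, z) ∈ T P → (y, x) ∈ T P → Precedes (T P) (y, x) (x, z)))

/-- A tiebreaker for `P` induced by the fixed tie-breaking order `r` on pairs: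
edges are ordered by decreasing margin, ties in margin broken according to `r`. -/
def IsTiebreakerVia {ν α : Type} (r : α × α → α × α → Prop) (P : Profile ν α)
    (L : List (α × α)) : Prop :=
  IsTiebreaker P L ∧ ∀ e f : α × α, Precedes L e f →
    P.margin f.1 f.2 < P.margin e.1 e.2 ∨ (P.margin e.1 e.2 = P.margin f.1 f.2 ∧ r e f)

namespace River

variable {α : Type}

def Blocked (E : Finset (α × α)) (e : α × α) : Prop :=
  (∃ f ∈ E, f.2 = e.2) ∨ Relation.ReflTransGen (fun p q => (p, q) ∈ E) e.2 e.1

theorem Blocked.mono {E F : Finset (α × α)} {e : α × α} (hEF : E ⊆ F) (h : Blocked E e) :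
    Blocked F e := by
  rcases h with ⟨f, hf, hfe⟩ | hpath
  · exact Or.inl ⟨f, hEF hf, hfe⟩
  · exact Or.inr (Relation.ReflTransGen.mono (fun _ _ hpq => hEF hpq) _ _ hpath)

theorem Blocked.of_mem_edge {E : Finset (α × α)} {a b z : α} (hba : (b, a) ∈ E)
    (h : Blocked E (b, z)) : Blocked E (a, z) := by
  rcases h with hin | hpath
  · exact Or.inl hin
  · exact Or.inr (hpath.tail hba)

variable [DecidableEq α]

open Classical in
noncomputable def step (E : Finset (α × α)) (e : α × α) : Finset (α × α) :=
  if Blocked E e then E else insert e E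

theorem riverDiagram_eq_foldl (L : List (α × α)) : riverDiagram L = L.foldl step ∅ := by
  unfold riverDiagram step Blocked
  congr!

theorem step_of_blocked {E : Finset (α × α)} {e : α × α} (h : Blocked E e) : step E e = E :=
  if_pos h

theorem step_of_not_blocked {E : Finset (α × α)} {e : α × α} (h : ¬ Blocked E e) :
    step E e = insert e E :=
  if_neg h

theorem subset_step (E : Finset (α × α)) (e : α × α) : E ⊆ step E e := by
  by_cases h : Blocked E e
  · rw [step_of_blocked h]
  · rw [step_of_not_blocked h]; exact Finset.subset_insert e E

theorem step_subset_insert (E : Finset (α × α)) (e : α × α) : step E e ⊆ insert e E := by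
  by_cases h : Blocked E e
  · rw [step_of_blocked h]; exact Finset.subset_insert e E
  · rw [step_of_not_blocked h]

theorem blocked_step_self (E : Finset (α × α)) (e : α × α) : Blocked (step E e) e := by
  by_cases h : Blocked E e
  · rwa [step_of_blocked h]
  · exact Or.inl ⟨e, step_of_not_blocked h ▸ Finset.mem_insert_self e E, rfl⟩

theorem subset_foldl_step (l : List (α × α)) (E : Finset (α × α)) : E ⊆ l.foldl step E := by
  induction l generalizing E with
  | nil => exact subset_rfl
  | cons e t ih => exact (subset_step E e).trans (ih _)

theorem mem_of_mem_foldl_step {l : List (α × α)} {E : Finset (α × α)} {f : α × α}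
    (h : f ∈ l.foldl step E) : f ∈ E ∨ f ∈ l := by
  induction l generalizing E with
  | nil => exact Or.inl h
  | cons e t ih =>
    rcases ih h with hf | hf
    · rcases Finset.mem_insert.mp (step_subset_insert E e hf) with rfl | hf
      · exact Or.inr List.mem_cons_self
      · exact Or.inl hf
    · exact Or.inr (List.mem_cons_of_mem e hf)

theorem blocked_foldl_step_of_mem {l : List (α × α)} {e : α × α} (he : e ∈ l)
    (E : Finset (α × α)) : Blocked (l.foldl step E) e := by
  induction l generalizing E with
  | nil => exact absurd he List.not_mem_nil
  | cons g t ih =>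
    rcases List.mem_cons.mp he with rfl | he
    · exact (blocked_step_self E e).mono (subset_foldl_step t _)
    · exact ih he _

theorem reflTransGen_of_insert {D : Finset (α × α)} {a b x y : α} (hD : ∀ f ∈ D, f.1 ≠ a)
    (h : Relation.ReflTransGen (fun p q => (p, q) ∈ insert (b, a) D) x y) (hy : y ≠ a) :
    Relation.ReflTransGen (fun p q => (p, q) ∈ D) x y := by
  induction h with
  | refl => exact .refl
  | tail _ hcy ih =>
    rcases Finset.mem_insert.mp hcy with heq | hcy
    · exact absurd (congrArg Prod.snd heq) hy
    · exact (ih (hD _ hcy)).tail hcy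

theorem step_insert_comm {D : Finset (α × α)} {a b : α} (hD : ∀ f ∈ D, f.1 ≠ a) {e : α × α}
    (he₁ : e.1 ≠ a) (he₂ : e.2 ≠ a) : step (insert (b, a) D) e = insert (b, a) (step D e) := by
  have hiff : Blocked (insert (b, a) D) e ↔ Blocked D e := by
    refine ⟨?_, Blocked.mono (Finset.subset_insert _ _)⟩
    rintro (⟨f, hf, hfe⟩ | hpath)
    · rcases Finset.mem_insert.mp hf with rfl | hf
      · exact absurd hfe.symm he₂
      · exact Or.inl ⟨f, hf, hfe⟩
    · exact Or.inr (reflTransGen_of_insert hD hpath he₁)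
  by_cases h : Blocked D e
  · rw [step_of_blocked h, step_of_blocked (hiff.mpr h)]
  · rw [step_of_not_blocked h, step_of_not_blocked (mt hiff.mp h), Finset.insert_comm]

/-- `m` strictly decreases along `l`, so the second alternative in `hab` says that `(b, z)` is
processed before `(a, z)`. -/
theorem foldl_step_insert {β : Type*} [Preorder β] (m : α × α → β) {a b : α}
    (l : List (α × α)) (D : Finset (α × α)) (hD : ∀ f ∈ D, f.1 ≠ a)
    (hl : l.Pairwise fun e f => m f < m e)
    (hab : ∀ z, (a, z) ∈ l →
      Blocked (insert (b, a) D) (a, z) ∨ ((b, z) ∈ l ∧ m (a, z) < m (b, z))) :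
    l.foldl step (insert (b, a) D) =
      insert (b, a) ((l.filter fun e => e.1 ≠ a ∧ e.2 ≠ a).foldl step D) := by
  induction l generalizing D with
  | nil => rfl
  | cons e t ih =>
    obtain ⟨hlt, ht⟩ := List.pairwise_cons.mp hl
    have hab' : ∀ z, (a, z) ∈ t →
        Blocked (step (insert (b, a) D) e) (a, z) ∨ ((b, z) ∈ t ∧ m (a, z) < m (b, z)) := by
      intro z hz
      rcases hab z (List.mem_cons_of_mem e hz) with hbl | ⟨hbz, hm⟩
      · exact Or.inl (hbl.mono (subset_step _ e))
      · rcases List.mem_cons.mp hbz with rfl | hbz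
        · exact Or.inl ((blocked_step_self _ _).of_mem_edge
            (subset_step _ _ (Finset.mem_insert_self _ D)))
        · exact Or.inr ⟨hbz, hm⟩
    by_cases he : e.1 ≠ a ∧ e.2 ≠ a
    · rw [List.filter_cons_of_pos (by simpa using he), List.foldl_cons, List.foldl_cons,
        step_insert_comm hD he.1 he.2]
      rw [step_insert_comm hD he.1 he.2] at hab'
      refine ih _ (fun f hf => ?_) ht hab'
      rcases Finset.mem_insert.mp (step_subset_insert D e hf) with rfl | hf
      exacts [he.1, hD f hf]
    · have hblocked : Blocked (insert (b, a) D) e := by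
        obtain ⟨x, y⟩ := e
        obtain rfl | rfl : x = a ∨ y = a := by tauto
        · rcases hab y List.mem_cons_self with hbl | ⟨hby, hm⟩
          · exact hbl
          · rcases List.mem_cons.mp hby with heq | hby
            · exact absurd (heq ▸ hm) (lt_irrefl _)
            · exact absurd (hlt _ hby) (lt_asymm hm)
        · exact Or.inl ⟨(b, y), Finset.mem_insert_self _ D, rfl⟩
      rw [List.filter_cons_of_neg (by simpa using he), List.foldl_cons, step_of_blocked hblocked]
      rw [step_of_blocked hblocked] at hab'
      exact ih D hD ht hab'

theorem riverDiagram_append_cons_eq_insert {β : Type*} [Preorder β] (m : α × α → β) {a b : α}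
    (hba : b ≠ a) {L₁ L₂ : List (α × α)} (h₁ : ∀ e ∈ L₁, e.1 ≠ a ∧ e.2 ≠ a)
    (h₂ : L₂.Pairwise fun e f => m f < m e)
    (hab : ∀ z, (a, z) ∈ L₂ → (b, z) ∈ L₁ ∨ ((b, z) ∈ L₂ ∧ m (a, z) < m (b, z))) :
    riverDiagram (L₁ ++ (b, a) :: L₂) =
      insert (b, a) (riverDiagram ((L₁ ++ (b, a) :: L₂).filter fun e => e.1 ≠ a ∧ e.2 ≠ a)) := by
  set D := L₁.foldl step ∅
  have hD : ∀ f ∈ D, f.1 ≠ a ∧ f.2 ≠ a := fun f hf =>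
    (mem_of_mem_foldl_step hf).elim (absurd · (Finset.notMem_empty f)) (h₁ f)
  have hnot : ¬ Blocked D (b, a) := by
    rintro (⟨f, hf, hfa⟩ | hpath)
    · exact (hD f hf).2 hfa
    · rcases hpath.cases_head with h | ⟨c, hac, _⟩
      · exact hba h.symm
      · exact (hD _ hac).1 rfl
  have hfilter : (L₁ ++ (b, a) :: L₂).filter (fun e => e.1 ≠ a ∧ e.2 ≠ a) =
      L₁ ++ L₂.filter fun e => e.1 ≠ a ∧ e.2 ≠ a := by
    rw [List.filter_append, List.filter_eq_self.mpr (by simpa using h₁)]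
    simp
  rw [hfilter, riverDiagram_eq_foldl, riverDiagram_eq_foldl, List.foldl_append,
    List.foldl_append, List.foldl_cons, step_of_not_blocked hnot]
  refine foldl_step_insert m L₂ D (fun f hf => (hD f hf).1) h₂ fun z hz => ?_
  rcases hab z hz with hbz | hbz
  · exact Or.inl (((blocked_foldl_step_of_mem hbz ∅).mono (Finset.subset_insert _ D)).of_mem_edge
      (Finset.mem_insert_self _ D))
  · exact Or.inr hbz

end River

namespace Profile

variable {ν α : Type}

theorem margin_swap (P : Profile ν α) (x y : α) : P.margin y x = -P.margin x y := by
  unfold margin; ring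

theorem margin_self (P : Profile ν α) (x : α) : P.margin x x = 0 := by
  unfold margin; ring

theorem UniquelyWeighted.restrict [DecidableEq α] {P : Profile ν α} (h : P.UniquelyWeighted)
    (a : α) : (P.restrict a).UniquelyWeighted := by
  simp only [UniquelyWeighted, Profile.restrict, Finset.mem_erase] at h ⊢
  exact ⟨fun x hx y hy => h.1 x hx.2 y hy.2,
    fun x hx y hy v hv w hw => h.2 x hx.2 y hy.2 v hv.2 w hw.2⟩

end Profile

namespace IsTiebreaker

variable {ν α : Type} {P : Profile ν α} {L : List (α × α)}

theorem pairwise_margin_lt (hUW : P.UniquelyWeighted) (hL : IsTiebreaker P L) :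
    L.Pairwise fun e f => P.margin f.1 f.2 < P.margin e.1 e.2 := by
  refine (hL.1.and hL.2.2).imp_of_mem fun {e f} he hf ⟨hef, hle⟩ => hle.lt_of_ne ?_
  obtain ⟨he₁, he₂, hne, -⟩ := (hL.2.1 e).mp he
  obtain ⟨hf₁, hf₂, hnf, -⟩ := (hL.2.1 f).mp hf
  exact hUW.2 _ hf₁ _ hf₂ _ he₁ _ he₂ hnf hne (Ne.symm hef)

theorem eq (hUW : P.UniquelyWeighted) {L' : List (α × α)} (hL : IsTiebreaker P L)
    (hL' : IsTiebreaker P L') : L = L' := by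
  refine List.Perm.eq_of_pairwise (fun e f _ _ hef hfe => absurd hef (lt_asymm hfe))
    (hL.pairwise_margin_lt hUW) (hL'.pairwise_margin_lt hUW) ?_
  exact (List.perm_ext_iff_of_nodup hL.1 hL'.1).mpr fun e => (hL.2.1 e).trans (hL'.2.1 e).symm

theorem filter_restrict [DecidableEq α] (hL : IsTiebreaker P L) (a : α) :
    IsTiebreaker (P.restrict a) (L.filter fun e => e.1 ≠ a ∧ e.2 ≠ a) := by
  refine ⟨hL.1.filter _, fun e => ?_, hL.2.2.filter _⟩
  simp only [List.mem_filter, hL.2.1 e, Profile.restrict, Profile.margin, Finset.mem_erase,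
    decide_eq_true_eq]
  tauto

end IsTiebreaker

namespace QuasiParetoDominates

variable {ν α : Type} {P : Profile ν α} {a b : α}

theorem ne (h : QuasiParetoDominates P b a) : b ≠ a := by
  rintro rfl
  exact (P.margin_self b ▸ h.1.1).false

theorem margin_le_of_incident (h : QuasiParetoDominates P b a) {x y : α} (hx : x ∈ P.alts)
    (hy : y ∈ P.alts) (hxy : x ≠ y) (hxya : x = a ∨ y = a) : P.margin x y ≤ P.margin b a := by
  have hba := h.1.1
  rcases hxya with rfl | rfl
  · by_cases hyb : y = b
    · rw [hyb, P.margin_swap]; omega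
    · exact (h.2 y hy hxy.symm hyb).2
  · by_cases hxb : x = b
    · rw [hxb]
    · exact (h.2 x hx hxy hxb).1

theorem margin_lt (hUW : P.UniquelyWeighted) (h : QuasiParetoDominates P b a) (ha : a ∈ P.alts)
    (hb : b ∈ P.alts) {z : α} (hz : z ∈ P.alts) (hza : z ≠ a) (hzb : z ≠ b) :
    P.margin a z < P.margin b z :=
  (h.1.2 z hz hza hzb).lt_of_ne <| hUW.2 a ha z hz b hb z hz (Ne.symm hza) (Ne.symm hzb)
    fun hab => h.ne (congrArg Prod.fst hab).symm

end QuasiParetoDominates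

section QuasiParetoDominated

variable {ν α : Type} [DecidableEq α]

theorem riverDiagram_eq_insert_of_quasiParetoDominates {P : Profile ν α}
    (hUW : P.UniquelyWeighted) {a b : α} (ha : a ∈ P.alts) (hb : b ∈ P.alts)
    (hdom : QuasiParetoDominates P b a) {L : List (α × α)} (hL : IsTiebreaker P L) :
    riverDiagram L = insert (b, a) (riverDiagram (L.filter fun e => e.1 ≠ a ∧ e.2 ≠ a)) := by
  have hba := hdom.ne
  obtain ⟨L₁, L₂, rfl⟩ :=
    List.append_of_mem ((hL.2.1 (b, a)).mpr ⟨hb, ha, hba, hdom.1.1.le⟩)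
  obtain ⟨-, hpw, hcross⟩ := List.pairwise_append.mp (hL.pairwise_margin_lt hUW)
  refine River.riverDiagram_append_cons_eq_insert (fun e => P.margin e.1 e.2) hba
    (fun e he => ?_) (List.pairwise_cons.mp hpw).2 fun z hz => ?_
  · obtain ⟨he₁, he₂, hne, -⟩ := (hL.2.1 e).mp (List.mem_append_left _ he)
    have hlt : P.margin b a < P.margin e.1 e.2 := hcross e he (b, a) List.mem_cons_self
    by_contra hea
    exact hlt.not_ge (hdom.margin_le_of_incident he₁ he₂ hne (by tauto))
  · obtain ⟨-, hz, haz, hnn⟩ :=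
      (hL.2.1 (a, z)).mp (List.mem_append_right L₁ (List.mem_cons_of_mem _ hz))
    dsimp only at hnn
    have hzb : z ≠ b := by
      rintro rfl
      linarith [P.margin_swap a z, hdom.1.1]
    have hlt := hdom.margin_lt hUW ha hb hz haz.symm hzb
    have hbz : (b, z) ∈ L₁ ++ (b, a) :: L₂ :=
      (hL.2.1 (b, z)).mpr ⟨hb, hz, hzb.symm, hnn.trans hlt.le⟩
    rcases List.mem_append.mp hbz with hbz | hbz
    · exact Or.inl hbz
    · rcases List.mem_cons.mp hbz with hbz | hbz
      · exact absurd (congrArg Prod.snd hbz) haz.symm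
      · exact Or.inr ⟨hbz, hlt⟩

theorem riverWinners_restrict_of_riverDiagram_eq_insert (P : Profile ν α) {a b : α}
    {L L' : List (α × α)} (h : riverDiagram L = insert (b, a) (riverDiagram L')) :
    riverWinners P L = riverWinners (P.restrict a) L' := by
  ext x
  simp only [riverWinners, Profile.restrict, Finset.mem_filter, Finset.mem_erase, h,
    Finset.forall_mem_insert]
  tauto

end QuasiParetoDominated

theorem river_IQDA_uniquelyWeighted_general {ν α : Type} [DecidableEq α]
    (P : Profile ν α) (hUW : P.UniquelyWeighted)
    (a b : α) (ha : a ∈ P.alts) (hb : b ∈ P.alts) (hdom : QuasiParetoDominates P b a)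
    (L L' : List (α × α)) (hL : IsTiebreaker P L) (hL' : IsTiebreaker (P.restrict a) L') :
    riverWinners P L = riverWinners (P.restrict a) L' := by
  obtain rfl := (hL.filter_restrict a).eq (hUW.restrict a) hL'
  exact riverWinners_restrict_of_riverDiagram_eq_insert P
    (riverDiagram_eq_insert_of_quasiParetoDominates hUW ha hb hdom hL)

theorem river_IQDA_uniquelyWeighted {ν α : Type} [DecidableEq α]
    (P : Profile ν α) (hP : P.Valid) (hUW : P.UniquelyWeighted)
    (a b : α) (ha : a ∈ P.alts) (hb : b ∈ P.alts) (hdom : QuasiParetoDominates P b a)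
    (L L' : List (α × α)) (hL : IsTiebreaker P L) (hL' : IsTiebreaker (P.restrict a) L') :
    riverWinners P L = riverWinners (P.restrict a) L' :=
  river_IQDA_uniquelyWeighted_general P hUW a b ha hb hdom L L' hL hL'
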